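/- arXiv:1105.5181 — 3 statements merged into one kernel-verified Lean document; each statement's English description precedes it below -/
import Mathlib

section
/- For vectors p ≠ 0 and η in ℝ^d and 0 < s < 1, one has (1/2)(|p+η|^(2s) + |p−η|^(2s)) − |p|^(2s) ≤ s·|p|^(2s−2)·|η|². -/
/-!
Apply the tangent-line bound of the concave map `t ↦ t ^ s` at `‖p‖²` to `‖p ± η‖²` and
average: by the parallelogram law the first-order terms sum to `2 ‖η‖²`.
-/

open Real

theorem Real.rpow_le_rpow_add_mul_sub {s : ℝ} (hs0 : 0 ≤ s) (hs1 : s ≤ 1) {a x : ℝ}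
    (ha : 0 < a) (hx : 0 ≤ x) : x ^ s ≤ a ^ s + s * a ^ (s - 1) * (x - a) := by
  have hxa : 0 ≤ x / a := div_nonneg hx ha.le
  have bernoulli : (x / a) ^ s ≤ 1 + s * (x / a - 1) := by
    simpa using rpow_one_add_le_one_add_mul_self (s := x / a - 1) (by linarith) hs0 hs1
  calc x ^ s = a ^ s * (x / a) ^ s := by rw [← mul_rpow ha.le hxa, mul_div_cancel₀ x ha.ne']
    _ ≤ a ^ s * (1 + s * (x / a - 1)) := by gcongr
    _ = a ^ s + s * a ^ (s - 1) * (x - a) := by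
      rw [rpow_sub ha, rpow_one]
      field_simp

theorem Real.rpow_two_mul_le_add_mul_sq_sub {s : ℝ} (hs0 : 0 ≤ s) (hs1 : s ≤ 1) {r t : ℝ}
    (hr : 0 < r) (ht : 0 ≤ t) : t ^ (2 * s) ≤ r ^ (2 * s) + s * r ^ (2 * s - 2) * (t ^ 2 - r ^ 2) := by
  have hsq {u : ℝ} (hu : 0 ≤ u) (c : ℝ) : u ^ (2 * c) = (u ^ 2) ^ c := by
    rw [rpow_mul hu, rpow_two]
  rw [hsq ht, hsq hr.le, show 2 * s - 2 = 2 * (s - 1) by ring, hsq hr.le]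
  exact rpow_le_rpow_add_mul_sub hs0 hs1 (by positivity) (by positivity)

theorem parallelogram_rpow_bound' (d : ℕ) (s : ℝ) (hs0 : 0 < s) (hs1 : s < 1)
    (p η : EuclideanSpace ℝ (Fin d)) (hp : p ≠ 0) :
    (1 / 2) * (‖p + η‖ ^ (2 * s) + ‖p - η‖ ^ (2 * s)) - ‖p‖ ^ (2 * s) ≤
      s * ‖p‖ ^ (2 * s - 2) * ‖η‖ ^ 2 := by
  have hp' : 0 < ‖p‖ := norm_pos_iff.mpr hp
  have hplus := rpow_two_mul_le_add_mul_sq_sub hs0.le hs1.le hp' (norm_nonneg (p + η))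
  have hminus := rpow_two_mul_le_add_mul_sq_sub hs0.le hs1.le hp' (norm_nonneg (p - η))
  have hpar := parallelogram_law_with_norm ℝ p η
  linear_combination (1 / 2) * (hplus + hminus) + (s * ‖p‖ ^ (2 * s - 2) / 2) * hpar
end

section
/- For all real numbers E > 0 and 0 < s < 1, one has the identity (E^s − 1)₋ = s(1−s)·∫₀¹ (E−τ)₋ · τ^(s−2) dτ + s·(E−1)₋, where x₋ = max{−x, 0} denotes the negative part. -/
/-!
Only `τ ≥ E` contributes to the integral, and there `s (1 - s) (τ - E) τ^(s-2)` is the derivative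
of `(1 - s) τ^s + s E τ^(s-1)`, which equals `E^s` at `τ = E`. For `E < 1` this gives
`s (1 - s) ∫₀¹ = 1 - s + s E - E^s`, and adding `s (1 - E)` leaves `1 - E^s`; for `E ≥ 1` every
term vanishes.
-/

open intervalIntegral MeasureTheory Set

section NegPartIntegrals

variable {E a b : ℝ}

theorem max_neg_sub_mul_eqOn_zero (f : ℝ → ℝ) (ha : a ≤ E) (hb : b ≤ E) :
    EqOn (fun τ => max (-(E - τ)) 0 * f τ) 0 (uIcc a b) := by
  intro τ hτ
  have hτE : τ ≤ E := hτ.2.trans (max_le ha hb)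
  simp [hτE]

theorem integral_max_neg_sub_mul_eq_zero (f : ℝ → ℝ) (ha : a ≤ E) (hb : b ≤ E) :
    ∫ τ in a..b, max (-(E - τ)) 0 * f τ = 0 := by
  rw [integral_congr (max_neg_sub_mul_eqOn_zero f ha hb)]
  simp

theorem intervalIntegrable_max_neg_sub_mul_of_le (f : ℝ → ℝ) (ha : a ≤ E) (hb : b ≤ E) :
    IntervalIntegrable (fun τ => max (-(E - τ)) 0 * f τ) volume a b :=
  (continuousOn_const.congr (max_neg_sub_mul_eqOn_zero f ha hb)).intervalIntegrable

theorem continuousOn_max_neg_sub_mul_rpow (hE : 0 < E) (hEb : E ≤ b) (p : ℝ) :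
    ContinuousOn (fun τ => max (-(E - τ)) 0 * τ ^ p) (uIcc E b) := by
  rw [uIcc_of_le hEb]
  exact (continuous_const.sub continuous_id).neg.max continuous_const |>.continuousOn.mul
    (continuousOn_id.rpow_const fun τ hτ => Or.inl (hE.trans_le hτ.1).ne')

theorem hasDerivAt_primitive_max_neg_sub_mul_rpow {τ : ℝ} (s : ℝ) (hτ : 0 < τ) (hEτ : E ≤ τ) :
    HasDerivAt (fun x => (1 - s) * x ^ s + s * E * x ^ (s - 1))
      (s * (1 - s) * (max (-(E - τ)) 0 * τ ^ (s - 2))) τ := by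
  have hderiv := ((Real.hasDerivAt_rpow_const (p := s) (Or.inl hτ.ne')).const_mul (1 - s)).add
    ((Real.hasDerivAt_rpow_const (p := s - 1) (Or.inl hτ.ne')).const_mul (s * E))
  refine hderiv.congr_deriv ?_
  have hpow : τ ^ (s - 1) = τ * τ ^ (s - 2) := by
    rw [show s - 1 = s - 2 + 1 by ring, Real.rpow_add_one hτ.ne', mul_comm]
  rw [max_eq_left (by linarith), show s - 1 - 1 = s - 2 by ring, hpow]
  ring

theorem mul_integral_max_neg_sub_mul_rpow (s : ℝ) (hE : 0 < E) (hEb : E ≤ b) :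
    s * (1 - s) * ∫ τ in E..b, max (-(E - τ)) 0 * τ ^ (s - 2) =
      (1 - s) * b ^ s + s * E * b ^ (s - 1) - E ^ s := by
  have hderiv : ∀ τ ∈ uIcc E b, HasDerivAt (fun x => (1 - s) * x ^ s + s * E * x ^ (s - 1))
      (s * (1 - s) * (max (-(E - τ)) 0 * τ ^ (s - 2))) τ := by
    intro τ hτ
    rw [uIcc_of_le hEb] at hτ
    exact hasDerivAt_primitive_max_neg_sub_mul_rpow s (hE.trans_le hτ.1) hτ.1
  have hEE : E * E ^ (s - 1) = E ^ s := by
    rw [Real.rpow_sub_one hE.ne', mul_div_cancel₀ _ hE.ne']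
  rw [← intervalIntegral.integral_const_mul, integral_eq_sub_of_hasDerivAt hderiv]
  · linear_combination -s * hEE
  · exact ((continuousOn_max_neg_sub_mul_rpow hE hEb _).const_smul (s * (1 - s))).intervalIntegrable

end NegPartIntegrals

theorem negpart_rpow_integral_identity_general (E s : ℝ) (hE : 0 < E)
    (hs0 : 0 < s) :
    max (-(E ^ s - 1)) 0 =
      s * (1 - s) * (∫ τ in (0 : ℝ)..1, max (-(E - τ)) 0 * τ ^ (s - 2)) +
        s * max (-(E - 1)) 0 := by
  rcases le_or_gt 1 E with h1 | h1
  · have hEs : 1 ≤ E ^ s := Real.one_le_rpow h1 hs0.le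
    rw [integral_max_neg_sub_mul_eq_zero _ (zero_le_one.trans h1) h1]
    simp [hEs, h1]
  · have hEs : E ^ s < 1 := Real.rpow_lt_one hE.le h1 hs0
    rw [← integral_add_adjacent_intervals (b := E)
        (intervalIntegrable_max_neg_sub_mul_of_le _ hE.le le_rfl)
        (continuousOn_max_neg_sub_mul_rpow hE h1.le _).intervalIntegrable,
      integral_max_neg_sub_mul_eq_zero _ hE.le le_rfl, zero_add,
      mul_integral_max_neg_sub_mul_rpow s hE h1.le, max_eq_left (by linarith),
      max_eq_left (by linarith)]
    simp only [Real.one_rpow]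
    ring

theorem negpart_rpow_integral_identity (E s : ℝ) (hE : 0 < E)
    (hs0 : 0 < s) (hs1 : s < 1) :
    max (-(E ^ s - 1)) 0 =
      s * (1 - s) * (∫ τ in (0 : ℝ)..1, max (-(E - τ)) 0 * τ ^ (s - 2)) +
        s * max (-(E - 1)) 0 :=
  negpart_rpow_integral_identity_general E s hE hs0
end

section
/- Let (λ_k)_{k∈ℕ} be a non-decreasing sequence of real numbers, A, C > 0, B, D ∈ ℝ, and real exponents a, b with −1 < a−1 < b < a, related by C = A^(−1/a)·a·(a+1)^(−(1+a)/a) and D = B·(A(a+1))^(−(1+b)/a). If ∑_{k=1}^N λ_k = A N^(a+1) + B N^(b+1)(1+o(1)) as N → ∞, then ∑_{k∈ℕ} (Λ − λ_k)₊ = C Λ^((1+a)/a) − D Λ^((1+b)/a)(1+o(1)) as Λ → ∞. -/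
/-!
The Riesz mean `R(Λ) = ∑ (Λ - λ_k)₊` is the Legendre transform `sup_M (M Λ - S M)` of the partial
sums `S M = ∑_{k<M} λ_k`, the supremum being attained at the number `N(Λ)` of `λ_k` below `Λ`.
Write `S M = A M^(a+1) + E M`. The main part `M Λ - A M^(a+1)` is maximal, with value
`C Λ^((1+a)/a)`, at `M = ν := (Λ / (A (a+1)))^(1/a)`. For the upper bound evaluate at `N(Λ)`,
which is `∼ ν` because monotonicity lets one differentiate `S n ∼ A n^(a+1)` into
`λ_n ∼ A (a+1) n^a`. For the lower bound evaluate at `⌈ν⌉`, where the main part loses only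
`O(ν^(a-1)) = o(ν^(b+1))` since `a - 1 < b`. In both cases `E M = B ν^(b+1) (1 + o(1))`, which is
the second term `-D Λ^((1+b)/a)`.
-/

open Filter Topology Finset Real

lemma rpow_add_one_add_mul_sub_le {p x y : ℝ} (hp : 0 ≤ p) (hy : 0 < y) (hx : 0 ≤ x) :
    y ^ (p + 1) + (p + 1) * y ^ p * (x - y) ≤ x ^ (p + 1) := by
  have hbern := one_add_mul_self_le_rpow_one_add (s := x / y - 1)
    (by linarith [div_nonneg hx hy.le]) (by linarith : 1 ≤ p + 1)
  rw [add_sub_cancel, div_rpow hx hy.le, le_div_iff₀ (by positivity)] at hbern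
  calc y ^ (p + 1) + (p + 1) * y ^ p * (x - y)
      = (1 + (p + 1) * (x / y - 1)) * y ^ (p + 1) := by
        rw [rpow_add_one hy.ne']; field_simp
    _ ≤ x ^ (p + 1) := hbern

lemma sub_mul_le_sum_range_sub {f : ℕ → ℝ} (hf : Monotone f) (m n : ℕ) :
    ((m : ℝ) - n) * f n ≤ ∑ k ∈ range m, f k - ∑ k ∈ range n, f k := by
  rcases le_total n m with h | h
  · have := card_nsmul_le_sum (Ico n m) f (f n) fun k hk => hf (mem_Ico.1 hk).1
    rwa [Nat.card_Ico, nsmul_eq_mul, Nat.cast_sub h, sum_Ico_eq_sub f h] at this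
  · have := sum_le_card_nsmul (Ico m n) f (f n) fun k hk => hf (mem_Ico.1 hk).2.le
    rw [Nat.card_Ico, nsmul_eq_mul, Nat.cast_sub h, sum_Ico_eq_sub f h] at this
    linarith

lemma tendsto_div_rpow_of_tendsto_sub_div_rpow {F : ℕ → ℝ} {A B p q : ℝ} (hqp : q < p)
    (h : Tendsto (fun n : ℕ => (F n - A * (n : ℝ) ^ p) / (n : ℝ) ^ q) atTop (𝓝 B)) :
    Tendsto (fun n : ℕ => F n / (n : ℝ) ^ p) atTop (𝓝 A) := by
  have hpow : Tendsto (fun n : ℕ => (n : ℝ) ^ (q - p)) atTop (𝓝 0) := by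
    simpa [Function.comp_def] using
      (tendsto_rpow_neg_atTop (sub_pos.2 hqp)).comp tendsto_natCast_atTop_atTop
  have := (h.mul hpow).const_add A
  rw [mul_zero, add_zero] at this
  refine this.congr' ?_
  filter_upwards [eventually_gt_atTop 0] with n hn
  have hn : (0 : ℝ) < n := by exact_mod_cast hn
  rw [rpow_sub hn]
  field_simp
  ring

lemma tendsto_comp_div_rpow {α : Type*} {l : Filter α} {F : ℕ → ℝ} {A p c : ℝ}
    (hF : Tendsto (fun n : ℕ => F n / (n : ℝ) ^ p) atTop (𝓝 A)) {u : α → ℝ} {ψ : α → ℕ}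
    (hu : Tendsto u l atTop) (hψ : Tendsto (fun x => (ψ x : ℝ) / u x) l (𝓝 c)) (hc : 0 < c) :
    Tendsto (fun x => F (ψ x) / u x ^ p) l (𝓝 (A * c ^ p)) := by
  have hψtop : Tendsto ψ l atTop := by
    refine tendsto_natCast_atTop_iff.1 ((hψ.pos_mul_atTop hc hu).congr' ?_)
    filter_upwards [hu.eventually_gt_atTop 0] with x hx
    field_simp
  refine ((hF.comp hψtop).mul (hψ.rpow_const (Or.inl hc.ne'))).congr' ?_
  filter_upwards [hu.eventually_gt_atTop 0, hψtop.eventually_gt_atTop 0] with x hx hψx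
  have hψx : (0 : ℝ) < ψ x := by exact_mod_cast hψx
  simp only [Function.comp, div_rpow hψx.le hx.le]
  field_simp [(rpow_pos_of_pos hψx p).ne']

lemma tendsto_rpow_sub_one_div_sub_one (p : ℝ) :
    Tendsto (fun c : ℝ => (c ^ p - 1) / (c - 1)) (𝓝[≠] 1) (𝓝 p) := by
  have := hasDerivAt_iff_tendsto_slope.1 (hasDerivAt_rpow_const (p := p) (Or.inl one_ne_zero))
  rw [one_rpow, mul_one] at this
  exact this.congr fun c => by rw [slope_def_field, one_rpow]

lemma Monotone.div_rpow_sub_one_mul_le {f : ℕ → ℝ} (hf : Monotone f) (p : ℝ) (m : ℕ) {n : ℕ}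
    (hn : 0 < n) :
    f n / (n : ℝ) ^ (p - 1) * (((m : ℝ) - n) / n)
      ≤ (∑ k ∈ range m, f k - ∑ k ∈ range n, f k) / (n : ℝ) ^ p := by
  have hn : (0 : ℝ) < n := by exact_mod_cast hn
  have hrw : f n / (n : ℝ) ^ (p - 1) * (((m : ℝ) - n) / n)
      = ((m : ℝ) - n) * f n / (n : ℝ) ^ p := by
    rw [rpow_sub_one hn.ne']
    field_simp
  rw [hrw]
  gcongr
  exact sub_mul_le_sum_range_sub hf m n

/-- By monotonicity `f n` lies between the difference quotients of the partial sums over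
`[⌈c n⌉, n]` and `[n, ⌈c n⌉]`; these tend to `A (c ^ p - 1) / (c - 1)`, which tends to `A p` as
`c → 1`. -/
theorem Monotone.tendsto_div_rpow_of_tendsto_sum_div_rpow {f : ℕ → ℝ} (hf : Monotone f)
    {A p : ℝ} (h : Tendsto (fun n : ℕ => (∑ k ∈ range n, f k) / (n : ℝ) ^ p) atTop (𝓝 A)) :
    Tendsto (fun n : ℕ => f n / (n : ℝ) ^ (p - 1)) atTop (𝓝 (A * p)) := by
  set S : ℕ → ℝ := fun n => ∑ k ∈ range n, f k
  set d : ℝ → ℕ → ℝ := fun c n => ((⌈c * n⌉₊ : ℝ) - n) / n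
  set Q : ℝ → ℕ → ℝ := fun c n => ((S ⌈c * n⌉₊ - S n) / (n : ℝ) ^ p) / d c n
  have hceil : ∀ c : ℝ, 0 < c → Tendsto (fun n : ℕ => (⌈c * n⌉₊ : ℝ) / n) atTop (𝓝 c) :=
    fun c hc => (tendsto_nat_ceil_mul_div_atTop hc.le).comp tendsto_natCast_atTop_atTop
  have hd : ∀ c : ℝ, 0 < c → Tendsto (d c) atTop (𝓝 (c - 1)) := by
    refine fun c hc => ((hceil c hc).sub_const 1).congr' ?_
    filter_upwards [eventually_gt_atTop 0] with n hn
    have hn : (0 : ℝ) < n := by exact_mod_cast hn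
    simp only [d, sub_div, div_self hn.ne']
  have hQ : ∀ c : ℝ, 0 < c → c ≠ 1 → Tendsto (Q c) atTop (𝓝 (A * ((c ^ p - 1) / (c - 1)))) := by
    intro c hc hc1
    have hnum := (tendsto_comp_div_rpow h tendsto_natCast_atTop_atTop (hceil c hc) hc).sub h
    rw [← mul_div_assoc, mul_sub_one]
    exact (hnum.div (hd c hc) (sub_ne_zero.2 hc1)).congr fun n => by
      simp only [Pi.div_apply, Q, S, sub_div]
  have hslope := (tendsto_rpow_sub_one_div_sub_one p).const_mul A
  refine tendsto_order.2 ⟨fun L hL => ?_, fun L hL => ?_⟩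
  · obtain ⟨c, hcL, hc0, hc1⟩ := (((hslope.eventually (lt_mem_nhds hL)).filter_mono
      (nhdsLT_le_nhdsNE 1)).and (Ioo_mem_nhdsLT zero_lt_one)).exists
    filter_upwards [(hQ c hc0 hc1.ne).eventually (lt_mem_nhds hcL),
      (hd c hc0).eventually (gt_mem_nhds (sub_neg.2 hc1)), eventually_gt_atTop 0]
      with n hQn hdn hn
    exact hQn.trans_le ((div_le_iff_of_neg hdn).2 (hf.div_rpow_sub_one_mul_le p _ hn))
  · obtain ⟨c, hcL, hc1⟩ := (((hslope.eventually (gt_mem_nhds hL)).filter_mono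
      (nhdsGT_le_nhdsNE 1)).and self_mem_nhdsWithin).exists
    have hc0 : (0 : ℝ) < c := zero_lt_one.trans hc1
    filter_upwards [(hQ c hc0 hc1.ne').eventually (gt_mem_nhds hcL),
      (hd c hc0).eventually (lt_mem_nhds (sub_pos.2 hc1)), eventually_gt_atTop 0]
      with n hQn hdn hn
    exact ((le_div_iff₀ hdn).2 (hf.div_rpow_sub_one_mul_le p _ hn)).trans_lt hQn

/-- For monotone `f`, the number of terms below `Λ` (junk `0` if `f` never reaches `Λ`). -/
noncomputable def levelIndex (f : ℕ → ℝ) (Λ : ℝ) : ℕ := sInf {n | Λ ≤ f n}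

section LevelIndex

variable {f : ℕ → ℝ}

lemma le_apply_levelIndex (hf : Tendsto f atTop atTop) (Λ : ℝ) : Λ ≤ f (levelIndex f Λ) :=
  Nat.sInf_mem (hf.eventually_ge_atTop Λ).exists

lemma apply_lt_of_lt_levelIndex {Λ : ℝ} {k : ℕ} (hk : k < levelIndex f Λ) : f k < Λ :=
  not_le.1 (Nat.notMem_of_lt_sInf hk)

lemma tendsto_levelIndex (hf : Tendsto f atTop atTop) : Tendsto (levelIndex f) atTop atTop := by
  refine tendsto_atTop.2 fun n => ?_
  filter_upwards [(eventually_all_finset (range n)).2 fun k _ => eventually_gt_atTop (f k)]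
    with Λ hΛ
  by_contra! hlt
  exact (hΛ _ (mem_range.2 hlt)).not_ge (le_apply_levelIndex hf Λ)

lemma tendsto_atTop_of_tendsto_div_rpow {L a : ℝ} (hL : 0 < L) (ha : 0 < a)
    (h : Tendsto (fun n : ℕ => f n / (n : ℝ) ^ a) atTop (𝓝 L)) : Tendsto f atTop atTop := by
  refine (h.pos_mul_atTop hL
    ((tendsto_rpow_atTop ha).comp tendsto_natCast_atTop_atTop)).congr' ?_
  filter_upwards [eventually_gt_atTop 0] with n hn
  have hn : (0 : ℝ) < n := by exact_mod_cast hn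
  simp only [Function.comp, div_mul_cancel₀ _ (rpow_pos_of_pos hn a).ne']

lemma tendsto_levelIndex_div {L a : ℝ} (hL : 0 < L) (ha : 0 < a)
    (h : Tendsto (fun n : ℕ => f n / (n : ℝ) ^ a) atTop (𝓝 L)) :
    Tendsto (fun ν : ℝ => (levelIndex f (L * ν ^ a) : ℝ) / ν) atTop (𝓝 1) := by
  have hf := tendsto_atTop_of_tendsto_div_rpow hL ha h
  set N : ℝ → ℕ := fun ν => levelIndex f (L * ν ^ a)
  have hN : Tendsto N atTop atTop :=
    (tendsto_levelIndex hf).comp ((tendsto_rpow_atTop ha).const_mul_atTop hL)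
  have hprev : Tendsto (fun n : ℕ => f (n - 1) / (n : ℝ) ^ a) atTop (𝓝 L) := by
    have hψ : Tendsto (fun n : ℕ => ((n - 1 : ℕ) : ℝ) / n) atTop (𝓝 1) := by
      refine ((tendsto_natCast_div_add_atTop (1 : ℝ)).comp (tendsto_sub_atTop_nat 1)).congr' ?_
      filter_upwards [eventually_ge_atTop 1] with n hn
      simp [Nat.cast_sub hn]
    simpa using tendsto_comp_div_rpow h tendsto_natCast_atTop_atTop hψ one_pos
  have hratio : Tendsto (fun ν => L * ν ^ a / (N ν : ℝ) ^ a) atTop (𝓝 L) := by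
    refine tendsto_of_tendsto_of_tendsto_of_le_of_le' (hprev.comp hN) (h.comp hN) ?_ ?_
    · filter_upwards [hN.eventually_gt_atTop 0] with ν hν
      have := apply_lt_of_lt_levelIndex (Nat.sub_lt hν one_pos)
      exact div_le_div_of_nonneg_right this.le (by positivity)
    · filter_upwards with ν
      exact div_le_div_of_nonneg_right (le_apply_levelIndex hf _) (by positivity)
  have hpow := ((tendsto_const_nhds (x := L)).div hratio hL.ne').rpow_const
    (p := a⁻¹) (Or.inr (inv_nonneg.2 ha.le))
  rw [div_self hL.ne', one_rpow] at hpow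
  refine hpow.congr' ?_
  filter_upwards [eventually_gt_atTop 0, hN.eventually_gt_atTop 0] with ν hν hNν
  have hNν : (0 : ℝ) < N ν := by exact_mod_cast hNν
  change (L / (L * ν ^ a / (N ν : ℝ) ^ a)) ^ a⁻¹ = N ν / ν
  rw [div_div_eq_mul_div, mul_div_mul_left _ _ hL.ne', ← div_rpow hNν.le hν.le,
    rpow_rpow_inv (by positivity) ha.ne']

end LevelIndex

noncomputable def rieszMean (f : ℕ → ℝ) (Λ : ℝ) : ℝ := ∑' k, max (Λ - f k) 0

section RieszMean

variable {f : ℕ → ℝ} (hmono : Monotone f) (htop : Tendsto f atTop atTop)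
include hmono htop

lemma max_sub_eq_zero_of_levelIndex_le {Λ : ℝ} {k : ℕ} (hk : k ∉ range (levelIndex f Λ)) :
    max (Λ - f k) 0 = 0 := by
  have := (le_apply_levelIndex htop Λ).trans (hmono (not_lt.1 (mt mem_range.2 hk)))
  exact max_eq_right (sub_nonpos.2 this)

lemma rieszMean_eq (Λ : ℝ) :
    rieszMean f Λ = levelIndex f Λ * Λ - ∑ k ∈ range (levelIndex f Λ), f k := by
  rw [rieszMean, tsum_eq_sum fun k hk => max_sub_eq_zero_of_levelIndex_le hmono htop hk,
    sum_congr rfl fun k hk => max_eq_left (sub_nonneg.2 (apply_lt_of_lt_levelIndex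
      (mem_range.1 hk)).le), sum_sub_distrib, sum_const, card_range, nsmul_eq_mul]

lemma mul_sub_sum_le_rieszMean (Λ : ℝ) (M : ℕ) :
    M * Λ - ∑ k ∈ range M, f k ≤ rieszMean f Λ := by
  calc M * Λ - ∑ k ∈ range M, f k = ∑ k ∈ range M, (Λ - f k) := by
        rw [sum_sub_distrib, sum_const, card_range, nsmul_eq_mul]
    _ ≤ ∑ k ∈ range M, max (Λ - f k) 0 := sum_le_sum fun k _ => le_max_left _ _
    _ ≤ rieszMean f Λ := Summable.sum_le_tsum _ (fun _ _ => le_max_right _ _)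
        (summable_of_ne_finset_zero fun k hk => max_sub_eq_zero_of_levelIndex_le hmono htop hk)

end RieszMean

lemma mul_sub_rpow_le {a x ν : ℝ} (ha : 0 ≤ a) (hν : 0 < ν) (hx : 0 ≤ x) :
    (a + 1) * ν ^ a * x - x ^ (a + 1) ≤ a * ν ^ (a + 1) := by
  have := rpow_add_one_add_mul_sub_le ha hν hx
  rw [rpow_add_one hν.ne'] at *
  linarith

lemma sub_mul_sub_rpow_le {a x ν : ℝ} (ha : 0 ≤ a) (hν : 0 < ν) (hx : 0 < x) :
    a * ν ^ (a + 1) - ((a + 1) * ν ^ a * x - x ^ (a + 1))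
      ≤ (a + 1) * (x ^ a - ν ^ a) * (x - ν) := by
  have := rpow_add_one_add_mul_sub_le ha hx hν.le
  rw [rpow_add_one hν.ne', rpow_add_one hx.ne'] at *
  linarith

lemma tendsto_sub_mul_ceil_sub_rpow_div {a b : ℝ} (ha : 0 < a) (hab : a - 1 < b) :
    Tendsto (fun ν : ℝ => (a * ν ^ (a + 1) - ((a + 1) * ν ^ a * ⌈ν⌉₊ - (⌈ν⌉₊ : ℝ) ^ (a + 1)))
      / ν ^ (b + 1)) atTop (𝓝 0) := by
  have hpow : Tendsto (fun ν : ℝ => ν ^ (a - (b + 1))) atTop (𝓝 0) := by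
    simpa using tendsto_rpow_neg_atTop (by linarith : 0 < b + 1 - a)
  have hbound := ((((tendsto_nat_ceil_div_atTop (R := ℝ)).rpow_const
    (p := a) (Or.inl one_ne_zero)).sub_const 1).const_mul (a + 1)).mul hpow
  rw [one_rpow, sub_self, mul_zero] at hbound
  refine tendsto_of_tendsto_of_tendsto_of_le_of_le' tendsto_const_nhds hbound ?_ ?_
  · filter_upwards [eventually_gt_atTop 0] with ν hν
    exact div_nonneg (sub_nonneg.2 (mul_sub_rpow_le ha.le hν (Nat.cast_nonneg _)))
      (rpow_pos_of_pos hν _).le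
  · filter_upwards [eventually_gt_atTop 0] with ν hν
    have hx : ν ≤ ⌈ν⌉₊ := Nat.le_ceil ν
    have hx1 : (⌈ν⌉₊ : ℝ) - ν ≤ 1 := by linarith [Nat.ceil_lt_add_one hν.le]
    have hxa : ν ^ a ≤ (⌈ν⌉₊ : ℝ) ^ a := rpow_le_rpow hν.le hx ha.le
    calc _ ≤ (a + 1) * ((⌈ν⌉₊ : ℝ) ^ a - ν ^ a) * (⌈ν⌉₊ - ν) / ν ^ (b + 1) := by
          gcongr
          exact sub_mul_sub_rpow_le ha.le hν (hν.trans_le hx)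
      _ ≤ (a + 1) * ((⌈ν⌉₊ : ℝ) ^ a - ν ^ a) / ν ^ (b + 1) := by
          refine div_le_div_of_nonneg_right ?_ (rpow_pos_of_pos hν _).le
          exact mul_le_of_le_one_right (mul_nonneg (by linarith) (sub_nonneg.2 hxa)) hx1
      _ = _ := by
          rw [div_rpow (Nat.cast_nonneg _) hν.le, rpow_sub hν]
          field_simp

theorem tendsto_rieszMean_sub_div_rpow {f : ℕ → ℝ} (hf : Monotone f) {A B a b : ℝ} (hA : 0 < A)
    (ha : 0 < a) (hab : a - 1 < b) (hba : b < a)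
    (h : Tendsto (fun N : ℕ => ((∑ k ∈ range N, f k) - A * (N : ℝ) ^ (a + 1)) / (N : ℝ) ^ (b + 1))
      atTop (𝓝 B)) :
    Tendsto (fun ν : ℝ => (rieszMean f (A * (a + 1) * ν ^ a) - A * a * ν ^ (a + 1)) / ν ^ (b + 1))
      atTop (𝓝 (-B)) := by
  have hL : 0 < A * (a + 1) := by positivity
  have hr : Tendsto (fun n : ℕ => f n / (n : ℝ) ^ a) atTop (𝓝 (A * (a + 1))) := by
    simpa using hf.tendsto_div_rpow_of_tendsto_sum_div_rpow
      (tendsto_div_rpow_of_tendsto_sub_div_rpow (by linarith) h)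
  have htop := tendsto_atTop_of_tendsto_div_rpow hL ha hr
  set E : ℕ → ℝ := fun N => (∑ k ∈ range N, f k) - A * (N : ℝ) ^ (a + 1)
  have hE : ∀ ψ : ℝ → ℕ, Tendsto (fun ν => (ψ ν : ℝ) / ν) atTop (𝓝 1) →
      Tendsto (fun ν => E (ψ ν) / ν ^ (b + 1)) atTop (𝓝 B) := fun ψ hψ => by
    simpa using tendsto_comp_div_rpow h tendsto_id hψ one_pos
  set N : ℝ → ℕ := fun ν => levelIndex f (A * (a + 1) * ν ^ a)
  -- the Riesz mean is attained at `N ν`, and nearly attained at `⌈ν⌉₊`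
  have hupper : ∀ᶠ ν in atTop, (rieszMean f (A * (a + 1) * ν ^ a) - A * a * ν ^ (a + 1))
      / ν ^ (b + 1) ≤ -(E (N ν) / ν ^ (b + 1)) := by
    filter_upwards [eventually_gt_atTop 0] with ν hν
    rw [← neg_div]
    refine div_le_div_of_nonneg_right ?_ (rpow_pos_of_pos hν _).le
    have := mul_sub_rpow_le ha.le hν (Nat.cast_nonneg (N ν))
    rw [rieszMean_eq hf htop]
    nlinarith
  have hlower : ∀ᶠ ν in atTop,
      -(A * ((a * ν ^ (a + 1) - ((a + 1) * ν ^ a * ⌈ν⌉₊ - (⌈ν⌉₊ : ℝ) ^ (a + 1))) / ν ^ (b + 1)))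
        - E ⌈ν⌉₊ / ν ^ (b + 1)
      ≤ (rieszMean f (A * (a + 1) * ν ^ a) - A * a * ν ^ (a + 1)) / ν ^ (b + 1) := by
    filter_upwards [eventually_gt_atTop 0] with ν hν
    rw [mul_div_assoc', ← neg_div, div_sub_div_same]
    refine div_le_div_of_nonneg_right ?_ (rpow_pos_of_pos hν _).le
    have := mul_sub_sum_le_rieszMean hf htop (A * (a + 1) * ν ^ a) ⌈ν⌉₊
    linarith
  have hlim := ((tendsto_sub_mul_ceil_sub_rpow_div ha hab).const_mul A).neg.sub
    (hE _ tendsto_nat_ceil_div_atTop)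
  rw [mul_zero, neg_zero, zero_sub] at hlim
  exact tendsto_of_tendsto_of_tendsto_of_le_of_le' hlim
    (hE N (tendsto_levelIndex_div hL ha hr)).neg hlower hupper

lemma div_rpow_inv_rpow {x y : ℝ} (hx : 0 < x) (hy : 0 < y) (a s : ℝ) :
    ((x / y) ^ a⁻¹) ^ s = x ^ (s / a) * y ^ (-(s / a)) := by
  rw [← rpow_mul (div_pos hx hy).le, div_rpow hx.le hy.le, rpow_neg hy.le, div_eq_mul_inv,
    inv_mul_eq_div]

theorem asymptotics_sum_to_riesz_general (lam : ℕ → ℝ) (A B C D a b : ℝ)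
    (hA : 0 < A) (hmono : Monotone lam)
    (ha : -1 < a - 1) (hab : a - 1 < b) (hba : b < a)
    (hCdef : C = A ^ (-(1 / a)) * a * (a + 1) ^ (-((1 + a) / a)))
    (hDdef : D = B * (A * (a + 1)) ^ (-((1 + b) / a)))
    (hyp : Tendsto
      (fun N : ℕ =>
        ((∑ k ∈ Finset.range N, lam k) - A * (N : ℝ) ^ (a + 1)) / (N : ℝ) ^ (b + 1))
      atTop (nhds B)) :
    Tendsto
      (fun Λ : ℝ =>
        ((∑' k : ℕ, max (Λ - lam k) 0) - C * Λ ^ ((1 + a) / a)) / Λ ^ ((1 + b) / a))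
      atTop (nhds (-D)) := by
  have ha0 : 0 < a := by linarith
  set L := A * (a + 1)
  have hL : 0 < L := by positivity
  -- rescale `Λ = L ν ^ a`
  set ν : ℝ → ℝ := fun Λ => (Λ / L) ^ a⁻¹
  have hν : Tendsto ν atTop atTop :=
    (tendsto_rpow_atTop (inv_pos.2 ha0)).comp (tendsto_id.atTop_div_const hL)
  have hlim := ((tendsto_rieszMean_sub_div_rpow hmono hA ha0 hab hba hyp).comp hν).mul_const
    (L ^ (-((1 + b) / a)))
  rw [hDdef, ← neg_mul]
  refine hlim.congr' ?_
  filter_upwards [eventually_gt_atTop 0] with Λ hΛ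
  have hpow : ∀ s, ν Λ ^ s = Λ ^ (s / a) * L ^ (-(s / a)) := div_rpow_inv_rpow hΛ hL a
  have hΛ : L * ν Λ ^ a = Λ := by
    rw [hpow, div_self ha0.ne', rpow_one, rpow_neg_one]
    field_simp
  have hmain : A * a * ν Λ ^ (a + 1) = C * Λ ^ ((1 + a) / a) := by
    have hexp : 1 + -((1 + a) / a) = -(1 / a) := by field_simp; ring
    have hApow : A ^ (-(1 / a)) = A * A ^ (-((1 + a) / a)) := by
      rw [← hexp, rpow_add hA, rpow_one]
    rw [hpow, hCdef, hApow, mul_rpow hA.le (by linarith), add_comm a 1]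
    ring
  have hsecond : ν Λ ^ (b + 1) * L ^ ((1 + b) / a) = Λ ^ ((1 + b) / a) := by
    rw [hpow, add_comm b 1, rpow_neg hL.le, inv_mul_cancel_right₀ (rpow_pos_of_pos hL _).ne']
  change (rieszMean lam (L * ν Λ ^ a) - A * a * ν Λ ^ (a + 1)) / ν Λ ^ (b + 1)
    * L ^ (-((1 + b) / a)) = _
  rw [hΛ, hmain, ← hsecond, rpow_neg hL.le, div_mul_eq_div_div, ← div_eq_mul_inv]
  rfl

theorem asymptotics_sum_to_riesz (lam : ℕ → ℝ) (A B C D a b : ℝ)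
    (hA : 0 < A) (hC : 0 < C) (hmono : Monotone lam)
    (ha : -1 < a - 1) (hab : a - 1 < b) (hba : b < a)
    (hCdef : C = A ^ (-(1 / a)) * a * (a + 1) ^ (-((1 + a) / a)))
    (hDdef : D = B * (A * (a + 1)) ^ (-((1 + b) / a)))
    (hyp : Tendsto
      (fun N : ℕ =>
        ((∑ k ∈ Finset.range N, lam k) - A * (N : ℝ) ^ (a + 1)) / (N : ℝ) ^ (b + 1))
      atTop (nhds B)) :
    Tendsto
      (fun Λ : ℝ =>
        ((∑' k : ℕ, max (Λ - lam k) 0) - C * Λ ^ ((1 + a) / a)) / Λ ^ ((1 + b) / a))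
      atTop (nhds (-D)) :=
  asymptotics_sum_to_riesz_general lam A B C D a b hA hmono ha hab hba hCdef hDdef hyp
end
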